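/- For every natural number n ≥ 1, (d^n/dx^n)(x^n/(1-e^{-x})) evaluated at x = 1 equals S_n - n!/2, where S_n = n! + Σ_{j=1}^∞ [(2j+n-1)!/(2j-1)!] · B_{2j}/(2j)!. -/

import Mathlib

/-!
Write `B'ₖ` for the Bernoulli numbers with `B'₁ = +1/2`. The formal identity
`(∑ B'ₖ Xᵏ/k!) (e^X - 1) = X e^X` can be evaluated at any real `y` with `|y| < 2π` by
Cauchy products, because `|B'ₖ|/k! ≤ 4/(2π)ᵏ` (for even `k` this is `ζ(k) ≤ 2`).
Hence near `y = 1`, `yⁿ/(1 - e^{-y}) = ∑ B'ₖ/k! · y^(k+n-1)`, a power series that may be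
differentiated termwise.
At `y = 1` its `n`-th derivative has a vanishing term for `k = 0`, the term `n!/2` for `k = 1`,
vanishing terms for odd `k ≥ 3`, and `(2j+n-1)!/(2j-1)! · B_{2j}/(2j)!` for `k = 2j`.
-/

open scoped Nat
open Real Set PowerSeries Filter Topology

theorem Nat.descFactorial_mul_pow_sub_mul_pow {M : Type*} [Semiring M] (a m : ℕ) (x : M) :
    (a.descFactorial m : M) * x ^ (a - m) * x ^ m = a.descFactorial m * x ^ a := by
  rcases le_or_gt m a with hma | ham
  · rw [mul_assoc, pow_sub_mul_pow x hma]
  · simp [Nat.descFactorial_eq_zero_iff_lt.mpr ham]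

theorem Nat.cast_descFactorial_eq_factorial_div {K : Type*} [Field K] [CharZero K] {a m : ℕ}
    (h : m ≤ a) : (a.descFactorial m : K) = a ! / (a - m)! := by
  rw [Nat.descFactorial_eq_div h, Nat.cast_div (Nat.factorial_dvd_factorial (Nat.sub_le a m))]
  exact_mod_cast Nat.factorial_ne_zero _

theorem summable_descFactorial_mul_geometric (m : ℕ) {r : ℝ} (hr₀ : 0 ≤ r) (hr₁ : r < 1) :
    Summable fun j : ℕ => (j.descFactorial m : ℝ) * r ^ j := by
  refine (summable_pow_mul_geometric_of_norm_lt_one m (r := r) (by rwa [norm_of_nonneg hr₀]))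
    |>.of_nonneg_of_le (fun j => by positivity) fun j => ?_
  gcongr
  exact_mod_cast Nat.descFactorial_le_pow j m

section TermwiseDerivative

variable {c : ℕ → ℝ} {C R : ℝ} (p : ℕ)

theorem hasDerivAt_mul_descFactorial_mul_pow (m k : ℕ) (z : ℝ) :
    HasDerivAt (fun z => c k * (k + p).descFactorial m * z ^ (k + p - m))
      (c k * (k + p).descFactorial (m + 1) * z ^ (k + p - (m + 1))) z := by
  refine ((hasDerivAt_pow (k + p - m) z).const_mul (c k * (k + p).descFactorial m)).congr_deriv ?_
  rw [Nat.descFactorial_succ, Nat.sub_sub]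
  push_cast
  ring

theorem abs_mul_descFactorial_mul_pow_le (hc : ∀ k, |c k| ≤ C / R ^ k) (hR : 0 < R) (m k : ℕ)
    {s z : ℝ} (hs : 0 < s) (hz : |z| ≤ s) :
    |c k * (k + p).descFactorial m * z ^ (k + p - m)| ≤
      C * R ^ p / s ^ m * ((k + p).descFactorial m * (s / R) ^ (k + p)) := by
  have key : ((k + p).descFactorial m : ℝ) * s ^ (k + p - m) =
      (k + p).descFactorial m * s ^ (k + p) / s ^ m := by
    rw [eq_div_iff (by positivity), Nat.descFactorial_mul_pow_sub_mul_pow]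
  calc |c k * (k + p).descFactorial m * z ^ (k + p - m)|
      ≤ C / R ^ k * ((k + p).descFactorial m * s ^ (k + p - m)) := by
        rw [mul_assoc, abs_mul, abs_mul, abs_pow, Nat.abs_cast]
        exact mul_le_mul (hc k) (by gcongr) (by positivity) ((abs_nonneg _).trans (hc k))
    _ = C * R ^ p / s ^ m * ((k + p).descFactorial m * (s / R) ^ (k + p)) := by
        rw [key, div_pow, pow_add]
        field_simp
        ring

theorem hasSum_iteratedDeriv_tsum_mul_pow (hc : ∀ k, |c k| ≤ C / R ^ k) (m : ℕ) {y : ℝ}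
    (hy : |y| < R) :
    HasSum (fun k => c k * (k + p).descFactorial m * y ^ (k + p - m))
      (iteratedDeriv m (fun z => ∑' k, c k * z ^ (k + p)) y) := by
  obtain ⟨s, hys, hsR⟩ := exists_between hy
  have hs : 0 < s := (abs_nonneg y).trans_lt hys
  have hR : 0 < R := hs.trans hsR
  set u : ℕ → ℕ → ℝ :=
    fun m k => C * R ^ p / s ^ m * ((k + p).descFactorial m * (s / R) ^ (k + p))
  have hu (m : ℕ) : Summable (u m) :=
    ((summable_nat_add_iff p).mpr (summable_descFactorial_mul_geometric m (by positivity)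
      ((div_lt_one hR).mpr hsR))).mul_left _
  have hbound (m k : ℕ) (z : ℝ) (hz : z ∈ Ioo (-s) s) :
      ‖c k * (k + p).descFactorial m * z ^ (k + p - m)‖ ≤ u m k :=
    abs_mul_descFactorial_mul_pow_le p hc hR m k hs (abs_le.mpr ⟨hz.1.le, hz.2.le⟩)
  have hzero : (0 : ℝ) ∈ Ioo (-s) s := ⟨by linarith, hs⟩
  suffices h : ∀ m, ∀ z ∈ Ioo (-s) s, iteratedDeriv m (fun z => ∑' k, c k * z ^ (k + p)) z =
      ∑' k, c k * (k + p).descFactorial m * z ^ (k + p - m) by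
    rw [h m y (abs_lt.mp hys)]
    exact ((hu m).of_norm_bounded fun k => hbound m k y (abs_lt.mp hys)).hasSum
  intro m
  induction m with
  | zero => intro z _; simp
  | succ m ih =>
    intro z hz
    have hloc : iteratedDeriv m (fun z => ∑' k, c k * z ^ (k + p)) =ᶠ[𝓝 z]
        fun z => ∑' k, c k * (k + p).descFactorial m * z ^ (k + p - m) :=
      eventually_of_mem (isOpen_Ioo.mem_nhds hz) ih
    rw [iteratedDeriv_succ, hloc.deriv_eq]
    exact (hasDerivAt_tsum_of_isPreconnected (hu (m + 1)) isOpen_Ioo isPreconnected_Ioo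
      (fun k z _ => hasDerivAt_mul_descFactorial_mul_pow p m k z) (hbound (m + 1)) hzero
      ((hu m).of_norm_bounded fun k => hbound m k 0 hzero) hz).deriv

end TermwiseDerivative

theorem tsum_eq_add_add_tsum_two_mul_of_odd_eq_zero {E : Type*} [AddCommGroup E]
    [TopologicalSpace E] [IsTopologicalAddGroup E] [T2Space E] {f : ℕ → E} (hf : Summable f)
    (hodd : ∀ j, f (2 * j + 3) = 0) :
    ∑' k, f k = f 0 + f 1 + ∑' j, f (2 * (j + 1)) := by
  have hsupp : Function.support (fun k => f (k + 1 + 1)) ⊆ range (2 * ·) := by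
    intro k hk
    obtain ⟨j, rfl | rfl⟩ := k.even_or_odd'
    · exact ⟨j, rfl⟩
    · exact absurd (hodd j) hk
  rw [hf.tsum_eq_zero_add, ((summable_nat_add_iff 1).mpr hf).tsum_eq_zero_add, add_assoc,
    ← (mul_right_injective₀ two_ne_zero).tsum_eq hsupp]
  simp only [zero_add, mul_add, mul_one]

theorem abs_bernoulli_two_mul_div_factorial_le {j : ℕ} (hj : j ≠ 0) :
    |(bernoulli (2 * j) : ℝ)| / (2 * j)! ≤ 4 / (2 * π) ^ (2 * j) := by
  have hζ := hasSum_zeta_nat hj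
  set ζ := (-1 : ℝ) ^ (j + 1) * 2 ^ (2 * j - 1) * π ^ (2 * j) * bernoulli (2 * j) / (2 * j)!
  have hζ₀ : 0 ≤ ζ := hζ.nonneg fun n => by positivity
  have hterm (n : ℕ) : 1 / (n : ℝ) ^ (2 * j) ≤ 1 / (n : ℝ) ^ 2 := by
    rcases n.eq_zero_or_pos with rfl | hn
    · simp [hj]
    · gcongr
      · exact_mod_cast hn
      · omega
  have hζ₂ : ζ ≤ 2 := by nlinarith [hasSum_le hterm hζ hasSum_zeta_two, pi_lt_d2, pi_pos]
  have habs : |ζ| = 2 ^ (2 * j - 1) * π ^ (2 * j) * (|(bernoulli (2 * j) : ℝ)| / (2 * j)!) := by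
    simp only [ζ, abs_div, abs_mul, abs_pow, abs_neg, abs_one, one_pow, one_mul, Nat.abs_cast,
      abs_of_pos pi_pos, abs_two]
    ring
  have h2 : (2 : ℝ) ^ (2 * j) = 2 * 2 ^ (2 * j - 1) := by
    rw [← pow_succ']; congr 1; omega
  rw [abs_of_nonneg hζ₀] at habs
  rw [mul_pow, h2, le_div_iff₀ (by positivity)]
  nlinarith

theorem abs_bernoulli'_div_factorial_le (k : ℕ) :
    |(bernoulli' k : ℝ) / k !| ≤ 4 / (2 * π) ^ k := by
  rcases k.even_or_odd with ⟨j, rfl⟩ | hodd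
  · rcases eq_or_ne j 0 with rfl | hj
    · norm_num
    · rw [← two_mul, bernoulli'_eq_bernoulli, pow_mul, neg_one_sq, one_pow, one_mul, abs_div,
        Nat.abs_cast]
      exact abs_bernoulli_two_mul_div_factorial_le hj
  · obtain hk | rfl := Nat.lt_or_eq_of_le hodd.pos
    · rw [bernoulli'_eq_zero_of_odd hodd hk]
      simp only [Rat.cast_zero, zero_div, abs_zero]
      positivity
    · rw [bernoulli'_one, le_div_iff₀ (by positivity)]
      norm_num
      linarith [pi_le_four]

theorem PowerSeries.tsum_coeff_mul_mul_pow {R : Type*} [NormedCommRing R] [CompleteSpace R]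
    {A B : PowerSeries R} {y : R} (hA : Summable fun k => ‖coeff k A * y ^ k‖)
    (hB : Summable fun k => ‖coeff k B * y ^ k‖) :
    ∑' k, coeff k (A * B) * y ^ k = (∑' k, coeff k A * y ^ k) * ∑' k, coeff k B * y ^ k := by
  rw [tsum_mul_tsum_eq_tsum_sum_antidiagonal_of_summable_norm hA hB]
  refine tsum_congr fun k => ?_
  rw [coeff_mul, Finset.sum_mul]
  refine Finset.sum_congr rfl fun ij hij => ?_
  rw [← Finset.HasAntidiagonal.mem_antidiagonal.mp hij, pow_add]
  ring

theorem PowerSeries.hasSum_coeff_X_mul_pow {R : Type*} [Ring R] [TopologicalSpace R] (y : R) :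
    HasSum (fun k => coeff k (X : PowerSeries R) * y ^ k) y := by
  refine (hasSum_ite_eq 1 y).congr_fun fun k => ?_
  split_ifs with hk <;> simp [coeff_X, hk]

theorem PowerSeries.summable_norm_coeff_X_mul_pow {R : Type*} [NormedRing R] (y : R) :
    Summable fun k => ‖coeff k (X : PowerSeries R) * y ^ k‖ :=
  summable_of_ne_finset_zero (s := {1}) fun k hk => by simp_all [coeff_X]

theorem PowerSeries.hasSum_coeff_exp_mul_pow (y : ℝ) :
    HasSum (fun k => coeff k (exp ℝ) * y ^ k) (Real.exp y) := by
  rw [Real.exp_eq_exp_ℝ]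
  refine (NormedSpace.expSeries_div_hasSum_exp y).congr_fun fun k => ?_
  simp [coeff_exp, div_eq_inv_mul, mul_comm]

theorem PowerSeries.summable_norm_coeff_exp_mul_pow (y : ℝ) :
    Summable fun k => ‖coeff k (exp ℝ) * y ^ k‖ := by
  simpa [coeff_exp, abs_pow, div_eq_inv_mul] using Real.summable_pow_div_factorial |y|

theorem PowerSeries.hasSum_coeff_exp_sub_one_mul_pow (y : ℝ) :
    HasSum (fun k => coeff k (exp ℝ - 1) * y ^ k) (Real.exp y - 1) := by
  refine ((hasSum_coeff_exp_mul_pow y).sub (hasSum_ite_eq 0 (1 : ℝ))).congr_fun fun k => ?_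
  split_ifs with hk <;> simp [coeff_one, hk]

theorem PowerSeries.summable_norm_coeff_exp_sub_one_mul_pow (y : ℝ) :
    Summable fun k => ‖coeff k (exp ℝ - 1) * y ^ k‖ := by
  refine (summable_norm_coeff_exp_mul_pow y).of_nonneg_of_le (fun _ => norm_nonneg _) fun k => ?_
  rcases k with _ | k <;> simp [coeff_one]

theorem PowerSeries.coeff_bernoulli'PowerSeries {K : Type*} [Field K] [CharZero K] (k : ℕ) :
    coeff k (bernoulli'PowerSeries K) = (bernoulli' k : K) / k ! := by
  simp [bernoulli'PowerSeries]

theorem tsum_bernoulli'_div_factorial_mul_pow_mul_exp_sub_one {y : ℝ} (hy : |y| < 2 * π) :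
    (∑' k, (bernoulli' k : ℝ) / k ! * y ^ k) * (Real.exp y - 1) = y * Real.exp y := by
  have hB : Summable fun k => ‖coeff k (bernoulli'PowerSeries ℝ) * y ^ k‖ := by
    have hgeom : Summable fun k : ℕ => 4 * (|y| / (2 * π)) ^ k :=
      (summable_geometric_of_lt_one (by positivity)
        ((div_lt_one (by positivity)).mpr hy)).mul_left 4
    refine hgeom.of_nonneg_of_le (fun _ => norm_nonneg _) fun k => ?_
    rw [norm_mul, norm_pow, coeff_bernoulli'PowerSeries, norm_eq_abs, norm_eq_abs, div_pow,
      ← mul_div_assoc, mul_div_right_comm]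
    gcongr
    exact abs_bernoulli'_div_factorial_le k
  have h := congrArg (fun A => ∑' k, coeff k A * y ^ k)
    (bernoulli'PowerSeries_mul_exp_sub_one ℝ)
  rw [tsum_coeff_mul_mul_pow hB (summable_norm_coeff_exp_sub_one_mul_pow y),
    tsum_coeff_mul_mul_pow (summable_norm_coeff_X_mul_pow y) (summable_norm_coeff_exp_mul_pow y),
    (hasSum_coeff_exp_sub_one_mul_pow y).tsum_eq, (hasSum_coeff_X_mul_pow y).tsum_eq,
    (hasSum_coeff_exp_mul_pow y).tsum_eq] at h
  simpa only [coeff_bernoulli'PowerSeries] using h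

theorem pow_div_one_sub_exp_neg_eq_tsum {n : ℕ} (hn : 1 ≤ n) {y : ℝ} (hy₀ : y ≠ 0)
    (hy : |y| < 2 * π) :
    y ^ n / (1 - Real.exp (-y)) = ∑' k, (bernoulli' k : ℝ) / k ! * y ^ (k + (n - 1)) := by
  have hexp : Real.exp y - 1 ≠ 0 := sub_ne_zero.mpr (Real.exp_eq_one_iff y |>.not.mpr hy₀)
  have hβ := (eq_div_iff hexp).mpr (tsum_bernoulli'_div_factorial_mul_pow_mul_exp_sub_one hy)
  simp_rw [pow_add, ← mul_assoc]
  rw [tsum_mul_right, hβ, Real.exp_neg, ← pow_sub_mul_pow y hn, pow_one]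
  field_simp

theorem deriv_at_one (n : ℕ) (hn : 1 ≤ n) :
    iteratedDeriv n (fun y : ℝ => y ^ n / (1 - Real.exp (-y))) 1 =
      ((n.factorial : ℝ) +
          ∑' j : ℕ,
            (((2 * (j + 1) + n - 1).factorial : ℝ) / ((2 * (j + 1) - 1).factorial : ℝ)) *
              ((bernoulli (2 * (j + 1)) : ℝ) / ((2 * (j + 1)).factorial : ℝ))) -
        (n.factorial : ℝ) / 2 := by
  have h1 : |(1 : ℝ)| < 2 * π := by rw [abs_one]; linarith [pi_gt_three]
  have hloc : (fun y : ℝ => y ^ n / (1 - Real.exp (-y))) =ᶠ[𝓝 1]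
      fun y => ∑' k, (bernoulli' k : ℝ) / k ! * y ^ (k + (n - 1)) := by
    filter_upwards [Ioo_mem_nhds one_pos (abs_lt.mp h1).2] with y hy
    exact pow_div_one_sub_exp_neg_eq_tsum hn hy.1.ne'
      (abs_lt.mpr ⟨by linarith [hy.1, pi_pos], hy.2⟩)
  have hsum := hasSum_iteratedDeriv_tsum_mul_pow (n - 1) abs_bernoulli'_div_factorial_le n h1
  have hodd (j : ℕ) : (bernoulli' (2 * j + 3) : ℝ) = 0 := by
    rw [bernoulli'_eq_zero_of_odd ⟨j + 1, by ring⟩ (by omega), Rat.cast_zero]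
  have heven (j : ℕ) : (bernoulli' (2 * (j + 1)) : ℝ) / (2 * (j + 1))! *
      (2 * (j + 1) + (n - 1)).descFactorial n * 1 ^ (2 * (j + 1) + (n - 1) - n) =
      (2 * (j + 1) + n - 1)! / (2 * (j + 1) - 1)! *
        (bernoulli (2 * (j + 1)) / (2 * (j + 1))!) := by
    rw [← bernoulli_eq_bernoulli'_of_ne_one (by omega), Nat.cast_descFactorial_eq_factorial_div
      (by omega), one_pow, show 2 * (j + 1) + (n - 1) = 2 * (j + 1) + n - 1 by omega,
      show 2 * (j + 1) + n - 1 - n = 2 * (j + 1) - 1 by omega]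
    ring
  rw [hloc.iteratedDeriv_eq, ← hsum.tsum_eq,
    tsum_eq_add_add_tsum_two_mul_of_odd_eq_zero hsum.summable fun j => by simp [hodd],
    tsum_congr heven, Nat.descFactorial_eq_zero_iff_lt.mpr (by omega : 0 + (n - 1) < n),
    show 1 + (n - 1) = n by omega, Nat.descFactorial_self, bernoulli'_one]
  push_cast
  ring
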